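/- arXiv:2502.15655 — 6 statements merged into one kernel-verified Lean document; each statement's English description precedes it below -/
import Mathlib

section
/- Let μ be a probability measure on ℝ with supp(μ) ⊆ [−M, M], and let K, ε > 0. For every z ∈ ℂ with |Re z| ≤ K, dist(Re z, supp(μ)) ≥ ε, and |Im z| ≤ ε³/(4(M+K)²), the derivative of the Stieltjes transform satisfies |S_μ′(z)| ≥ 1/(2(M+K)²). -/
open MeasureTheory Metric Complex

/-- The topological support of a measure: the set of points all of whose open
neighborhoods have nonzero measure. -/
def measSupport {α : Type*} [TopologicalSpace α] [MeasurableSpace α]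
    (μ : Measure α) : Set α :=
  {x | ∀ U : Set α, IsOpen U → x ∈ U → μ U ≠ 0}

/-- The Stieltjes transform of a measure on `ℝ`. -/
noncomputable def stieltjes (μ : Measure ℝ) (z : ℂ) : ℂ :=
  ∫ t, ((t : ℂ) - z)⁻¹ ∂μ

/-!
Differentiating under the integral, `S_μ'(z) = ∫ (t - z)⁻² dμ(t)`. For `t` in the support,
`w = t - z` has `ε ≤ |Re w| ≤ M + K` and, since `ε ≤ M + K`, `|Im w| ≤ ε / 4 ≤ |Re w| / 4`.
Such a `w` is close enough to the real axis that `Re (w⁻²) ≥ 1 / (2 (M + K)²)`, and averaging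
this over the probability measure `μ` bounds `Re S_μ'(z)`, hence `|S_μ'(z)|`, from below.
-/

open Filter

theorem measSupport_eq_support {X : Type*} [TopologicalSpace X] [MeasurableSpace X]
    (μ : Measure X) : measSupport μ = μ.support := by
  ext x
  simp only [measSupport, Set.mem_ofPred_eq, (nhds_basis_opens x).mem_measureSupport,
    pos_iff_ne_zero, and_imp]
  exact forall_congr' fun U => imp.swap

section Stieltjes

variable {μ : Measure ℝ} [IsFiniteMeasure μ] {z : ℂ} {δ : ℝ}

theorem integrable_inv_sub_pow (n : ℕ) (hδ : 0 < δ) (h : ∀ᵐ (t : ℝ) ∂μ, δ ≤ ‖(t : ℂ) - z‖) :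
    Integrable (fun t : ℝ => (((t : ℂ) - z) ^ n)⁻¹) μ := by
  refine Integrable.of_bound (by fun_prop) (δ ^ n)⁻¹ ?_
  filter_upwards [h] with t ht
  rw [norm_inv, norm_pow]
  gcongr

theorem hasDerivAt_stieltjes (hδ : 0 < δ) (h : ∀ᵐ (t : ℝ) ∂μ, δ ≤ ‖(t : ℂ) - z‖) :
    HasDerivAt (stieltjes μ) (∫ t, (((t : ℂ) - z) ^ 2)⁻¹ ∂μ) z := by
  have hδ2 : 0 < δ / 2 := half_pos hδ
  have h_ball : ∀ᵐ (t : ℝ) ∂μ, ∀ w ∈ ball z (δ / 2), δ / 2 ≤ ‖(t : ℂ) - w‖ := by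
    filter_upwards [h] with t ht w hw
    have := norm_sub_le_norm_sub_add_norm_sub (t : ℂ) w z
    rw [mem_ball, dist_eq_norm] at hw
    linarith
  have h_int : Integrable (fun t : ℝ => ((t : ℂ) - z)⁻¹) μ := by
    simpa only [pow_one] using integrable_inv_sub_pow 1 hδ h
  refine (hasDerivAt_integral_of_dominated_loc_of_deriv_le
    (F := fun w (t : ℝ) => ((t : ℂ) - w)⁻¹) (F' := fun w (t : ℝ) => (((t : ℂ) - w) ^ 2)⁻¹)
    (bound := fun _ => ((δ / 2) ^ 2)⁻¹) (ball_mem_nhds z hδ2)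
    (Eventually.of_forall fun w => by fun_prop) h_int (by fun_prop) ?_ (integrable_const _) ?_).2
  · filter_upwards [h_ball] with t ht w hw
    rw [norm_inv, norm_pow]
    gcongr
    exact ht w hw
  · filter_upwards [h_ball] with t ht w hw
    have hne : (t : ℂ) - w ≠ 0 := norm_pos_iff.1 (hδ2.trans_le (ht w hw))
    exact (((hasDerivAt_id w).const_sub (t : ℂ)).inv hne).congr_deriv (by simp)

end Stieltjes

theorem one_div_two_mul_sq_le_re_inv_sq {w : ℂ} {R : ℝ} (h0 : w.re ≠ 0) (hR : |w.re| ≤ R)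
    (him : |w.im| ≤ |w.re| / 4) : 1 / (2 * R ^ 2) ≤ (w ^ 2)⁻¹.re := by
  have hre : (w ^ 2).re = w.re ^ 2 - w.im ^ 2 := by simp [sq, mul_re]
  have hnormSq : normSq (w ^ 2) = (w.re ^ 2 + w.im ^ 2) ^ 2 := by
    rw [map_pow, normSq_apply]; ring
  have ha : 0 < w.re ^ 2 := by positivity
  have hR0 : 0 < R := (abs_pos.2 h0).trans_le hR
  have hb : w.im ^ 2 ≤ w.re ^ 2 / 16 := by
    have := pow_le_pow_left₀ (abs_nonneg _) him 2
    rw [div_pow, sq_abs, sq_abs] at this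
    linarith
  have hR2 : w.re ^ 2 ≤ R ^ 2 := by
    simpa only [sq_abs] using pow_le_pow_left₀ (abs_nonneg _) hR 2
  rw [inv_re, hre, hnormSq, div_le_div_iff₀ (by positivity) (by positivity)]
  nlinarith [sq_nonneg w.im]

theorem le_norm_integral_of_le_re {α : Type*} [MeasurableSpace α] {μ : Measure α}
    [IsProbabilityMeasure μ] {f : α → ℂ} {c : ℝ} (hf : Integrable f μ)
    (h : ∀ᵐ x ∂μ, c ≤ (f x).re) : c ≤ ‖∫ x, f x ∂μ‖ :=
  calc c = ∫ _, c ∂μ := by simp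
    _ ≤ ∫ x, (f x).re ∂μ := integral_mono_ae (integrable_const c) hf.re h
    _ = (∫ x, f x ∂μ).re := integral_re hf
    _ ≤ ‖∫ x, f x ∂μ‖ := re_le_norm _

theorem deriv_stieltjes_lower_bound_general
    (μ : Measure ℝ) [IsProbabilityMeasure μ] (M K ε : ℝ)
    (hε : 0 < ε)
    (hsupp : measSupport μ ⊆ Set.Icc (-M) M)
    (z : ℂ) (hre : |z.re| ≤ K)
    (hdist : ε ≤ infDist z.re (measSupport μ))
    (him : |z.im| ≤ ε ^ 3 / (4 * (M + K) ^ 2)) :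
    1 / (2 * (M + K) ^ 2) ≤ ‖deriv (stieltjes μ) z‖ := by
  rw [measSupport_eq_support] at hsupp hdist
  have h_far : ∀ t ∈ μ.support, ε ≤ |t - z.re| := fun t ht => by
    simpa [Real.dist_eq, abs_sub_comm] using hdist.trans (infDist_le_dist_of_mem ht)
  have h_near : ∀ t ∈ μ.support, |t - z.re| ≤ M + K := fun t ht =>
    (abs_sub _ _).trans (add_le_add (abs_le.2 (hsupp ht)) hre)
  obtain ⟨t₀, ht₀⟩ := μ.nonempty_support (IsProbabilityMeasure.ne_zero μ)
  have hεMK : ε ≤ M + K := (h_far t₀ ht₀).trans (h_near t₀ ht₀)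
  have him' : |z.im| ≤ ε / 4 := by
    refine him.trans ?_
    rw [div_le_div_iff₀ (by nlinarith) (by norm_num)]
    nlinarith [pow_le_pow_left₀ hε.le hεMK 2]
  have h_norm : ∀ᵐ (t : ℝ) ∂μ, ε ≤ ‖(t : ℂ) - z‖ := by
    filter_upwards [Measure.support_mem_ae (μ := μ)] with t ht
    simpa using (h_far t ht).trans (abs_re_le_norm ((t : ℂ) - z))
  have h_re : ∀ᵐ (t : ℝ) ∂μ, 1 / (2 * (M + K) ^ 2) ≤ ((((t : ℂ) - z) ^ 2)⁻¹).re := by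
    filter_upwards [Measure.support_mem_ae (μ := μ)] with t ht
    refine one_div_two_mul_sq_le_re_inv_sq ?_ ?_ ?_ <;> simp only [sub_re, ofReal_re, sub_im,
      ofReal_im, zero_sub, abs_neg]
    · exact abs_pos.1 (hε.trans_le (h_far t ht))
    · exact h_near t ht
    · linarith [h_far t ht]
  rw [(hasDerivAt_stieltjes hε h_norm).deriv]
  exact le_norm_integral_of_le_re (integrable_inv_sub_pow 2 hε h_norm) h_re

/-- If `μ` is a probability measure supported in `[-M, M]`, `|Re z| ≤ K`,
`dist(Re z, supp μ) ≥ ε` and `|Im z| ≤ ε³/(4(M+K)²)`, then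
`|S_μ'(z)| ≥ 1/(2(M+K)²)`. -/
theorem deriv_stieltjes_lower_bound
    (μ : Measure ℝ) [IsProbabilityMeasure μ] (M K ε : ℝ)
    (hK : 0 < K) (hε : 0 < ε)
    (hsupp : measSupport μ ⊆ Set.Icc (-M) M)
    (z : ℂ) (hre : |z.re| ≤ K)
    (hdist : ε ≤ infDist z.re (measSupport μ))
    (him : |z.im| ≤ ε ^ 3 / (4 * (M + K) ^ 2)) :
    1 / (2 * (M + K) ^ 2) ≤ ‖deriv (stieltjes μ) z‖ :=
  deriv_stieltjes_lower_bound_general μ M K ε hε hsupp z hre hdist him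
end

section
/- Let τ ∈ (0,1], K > 0, φ > 0, and let μ be a probability measure on ℝ with μ(ℝ \ [−1/τ, 1/τ]) = 0. Let z ∈ ℂ with |z| ≤ K and let s ∈ ℂ with s ≠ 0 be such that the function x ↦ x/(1 + s x) is μ-integrable and the self-consistent equation 1/s = −z + φ ∫ x/(1 + s x) dμ(x) holds. Then |s| ≥ τ/(2(1 + K + φ)). -/
open MeasureTheory Complex

/-!
If `‖s‖` were below `τ / (2 (1 + K + φ))`, then `|s x| < 1/2` on the support `[-1/τ, 1/τ]`,
so `|1 + s x| > 1/2` and the integrand of the self-consistent equation is bounded by `2/τ`.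
The equation then bounds `1/‖s‖` by `K + 2φ/τ`, which is incompatible with `‖s‖` being that small.
-/

lemma norm_ofReal_div_one_add_mul_le {s : ℂ} {x R : ℝ} (hx : |x| ≤ R) (hsR : ‖s‖ * R ≤ 1 / 2) :
    ‖(x : ℂ) / (1 + s * x)‖ ≤ 2 * R := by
  have hsx : ‖s * x‖ ≤ 1 / 2 := by
    rw [norm_mul, norm_real, Real.norm_eq_abs]
    exact (mul_le_mul_of_nonneg_left hx (norm_nonneg s)).trans hsR
  have hden : 1 / 2 ≤ ‖1 + s * x‖ := by
    have := norm_sub_norm_le (1 : ℂ) (-(s * x))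
    rw [norm_one, norm_neg, sub_neg_eq_add] at this
    linarith
  rw [norm_div, norm_real, Real.norm_eq_abs]
  calc |x| / ‖1 + s * x‖ ≤ R / (1 / 2) := div_le_div₀ ((abs_nonneg x).trans hx) hx (by norm_num) hden
    _ = 2 * R := by ring

lemma norm_integral_ofReal_div_one_add_mul_le (μ : Measure ℝ) [IsProbabilityMeasure μ] {s : ℂ}
    {R : ℝ} (hsupp : μ (Set.Icc (-R) R)ᶜ = 0) (hsR : ‖s‖ * R ≤ 1 / 2) :
    ‖∫ x : ℝ, (x : ℂ) / (1 + s * x) ∂μ‖ ≤ 2 * R := by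
  have hbound : ∀ᵐ x : ℝ ∂μ, ‖(x : ℂ) / (1 + s * x)‖ ≤ 2 * R := by
    filter_upwards [measure_eq_zero_iff_ae_notMem.mp hsupp] with x hx
    rw [Set.mem_compl_iff, not_not] at hx
    exact norm_ofReal_div_one_add_mul_le (abs_le.mpr hx) hsR
  simpa using norm_integral_le_of_norm_le_const hbound

theorem stieltjes_solution_lower_bound_general
    (μ : Measure ℝ) [IsProbabilityMeasure μ] (τ K φ : ℝ)
    (hτ0 : 0 < τ) (hτ1 : τ ≤ 1) (hφ : 0 < φ)
    (hsupp : μ (Set.Icc (-(1 / τ)) (1 / τ))ᶜ = 0)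
    (z s : ℂ) (hz : ‖z‖ ≤ K) (hs : s ≠ 0)
    (heq : 1 / s = -z + (φ : ℂ) * ∫ x : ℝ, (x : ℂ) / (1 + s * x) ∂μ) :
    τ / (2 * (1 + K + φ)) ≤ ‖s‖ := by
  have hK : 0 ≤ K := (norm_nonneg z).trans hz
  have hs0 : 0 < ‖s‖ := norm_pos_iff.mpr hs
  by_contra! hsmall
  rw [lt_div_iff₀ (by positivity)] at hsmall
  have hsR : ‖s‖ * (1 / τ) ≤ 1 / 2 := by
    rw [mul_one_div, div_le_iff₀ hτ0]
    nlinarith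
  have hinv : 1 / ‖s‖ ≤ K + φ * (2 * (1 / τ)) := by
    calc 1 / ‖s‖ = ‖-z + (φ : ℂ) * ∫ x : ℝ, (x : ℂ) / (1 + s * x) ∂μ‖ := by
          rw [← heq, norm_div, norm_one]
      _ ≤ ‖z‖ + φ * ‖∫ x : ℝ, (x : ℂ) / (1 + s * x) ∂μ‖ := by
          grw [norm_add_le, norm_neg, norm_mul, norm_real, Real.norm_of_nonneg hφ.le]
      _ ≤ K + φ * (2 * (1 / τ)) := by
          grw [hz, norm_integral_ofReal_div_one_add_mul_le μ hsupp hsR]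
  rw [div_le_iff₀ hs0] at hinv
  have hτ : τ ≤ (K * τ + 2 * φ) * ‖s‖ := by
    have := mul_le_mul_of_nonneg_left hinv hτ0.le
    field_simp at this
    linarith
  have hKτ : K * τ + 2 * φ ≤ 2 * (1 + K + φ) := by nlinarith
  linarith [mul_le_mul_of_nonneg_right hKτ hs0.le]

/-- If `μ` is a probability measure supported in `[-1/τ, 1/τ]` with `τ ∈ (0,1]`,
`|z| ≤ K`, and `s ≠ 0` satisfies the self-consistent equation
`1/s = -z + φ ∫ x/(1 + s x) dμ(x)`, then `|s| ≥ τ/(2(1 + K + φ))`. -/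
theorem stieltjes_solution_lower_bound
    (μ : Measure ℝ) [IsProbabilityMeasure μ] (τ K φ : ℝ)
    (hτ0 : 0 < τ) (hτ1 : τ ≤ 1) (hK : 0 < K) (hφ : 0 < φ)
    (hsupp : μ (Set.Icc (-(1 / τ)) (1 / τ))ᶜ = 0)
    (z s : ℂ) (hz : ‖z‖ ≤ K) (hs : s ≠ 0)
    (hint : Integrable (fun x : ℝ => (x : ℂ) / (1 + s * x)) μ)
    (heq : 1 / s = -z + (φ : ℂ) * ∫ x : ℝ, (x : ℂ) / (1 + s * x) ∂μ) :
    τ / (2 * (1 + K + φ)) ≤ ‖s‖ :=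
  stieltjes_solution_lower_bound_general μ τ K φ hτ0 hτ1 hφ hsupp z s hz hs heq
end

section
/- Let M be an n×n real symmetric positive semidefinite matrix, let D be an n×n real symmetric invertible matrix, and let z ∈ ℂ with Im z > 0. Suppose the complex matrix A := z⁻¹ M − D⁻¹ is invertible. Then for every w ∈ ℝⁿ, Im(wᵀ A⁻¹ w) ≥ 0. -/
/-!
Write `Im X := (X - Xᴴ) / 2i`. The matrix `A = z⁻¹ M - D⁻¹` has `-Im A = (Im z / |z|²) M ≥ 0`,
because `D⁻¹` is real symmetric and so drops out of `A - Aᴴ`. Inversion reverses the sign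
of the imaginary part: `(A⁻¹)ᴴ - A⁻¹ = A⁻¹ (A - Aᴴ) (A⁻¹)ᴴ`, so `Im (A⁻¹) ≥ 0`. Evaluating
this positive semidefinite matrix at the real vector `w` gives `Im (wᵀ A⁻¹ w) ≥ 0`.
-/

open Matrix Complex
open scoped ComplexConjugate ComplexOrder MatrixOrder

namespace Matrix

theorem PosSemidef.map_ofReal {n : Type*} [Fintype n] {M : Matrix n n ℝ}
    (hM : M.PosSemidef) : (M.map ((↑) : ℝ → ℂ)).PosSemidef := by
  classical
  obtain ⟨B, rfl⟩ := CStarAlgebra.nonneg_iff_eq_star_mul_self.mp hM.nonneg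
  rw [star_eq_conjTranspose, show ((↑) : ℝ → ℂ) = ofRealHom from rfl, Matrix.map_mul,
    conjTranspose_map (ofRealHom : ℝ → ℂ) fun x => (conj_ofReal x).symm]
  exact posSemidef_conjTranspose_mul_self _

theorem IsSymm.isHermitian_map_ofReal {n : Type*} {D : Matrix n n ℝ} (hD : D.IsSymm) :
    (D.map ((↑) : ℝ → ℂ)).IsHermitian :=
  (isHermitian_iff_isSymm.mpr hD).map _ fun x => (conj_ofReal x).symm

theorem posSemidef_I_smul_sub_conjTranspose_of_im_nonpos {n : Type*} {P H : Matrix n n ℂ}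
    (hP : P.PosSemidef) (hH : H.IsHermitian) {c : ℂ} (hc : c.im ≤ 0) :
    (I • ((c • P - H) - (c • P - H)ᴴ)).PosSemidef := by
  have hscalar : I • ((c • P - H) - (c • P - H)ᴴ) = ((-2 * c.im : ℝ) : ℂ) • P := by
    rw [conjTranspose_sub, conjTranspose_smul, hP.isHermitian.eq, hH.eq,
      sub_sub_sub_cancel_right, ← sub_smul, star_def, sub_conj, smul_smul]
    congr 1
    push_cast
    linear_combination (2 * (c.im : ℂ)) * I_sq
  rw [hscalar]
  exact hP.smul (zero_le_real.mpr (by linarith))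

variable {n : Type*} [Fintype n]

theorem star_dotProduct_conjTranspose_mulVec (B : Matrix n n ℂ) (x : n → ℂ) :
    star x ⬝ᵥ (Bᴴ *ᵥ x) = conj (star x ⬝ᵥ (B *ᵥ x)) := by
  rw [star_dotProduct, star_mulVec, ← dotProduct_mulVec, conjTranspose_conjTranspose]
  rfl

theorem im_star_dotProduct_mulVec_nonneg {B : Matrix n n ℂ}
    (hB : (I • (Bᴴ - B)).PosSemidef) (x : n → ℂ) : 0 ≤ (star x ⬝ᵥ (B *ᵥ x)).im := by
  have hform : star x ⬝ᵥ ((I • (Bᴴ - B)) *ᵥ x) = ((2 * (star x ⬝ᵥ (B *ᵥ x)).im : ℝ) : ℂ) := by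
    rw [smul_mulVec, sub_mulVec, dotProduct_smul, dotProduct_sub,
      star_dotProduct_conjTranspose_mulVec, smul_eq_mul, ← neg_sub, sub_conj]
    push_cast
    linear_combination (-2 * ((star x ⬝ᵥ (B *ᵥ x)).im : ℂ)) * I_sq
  have := hB.dotProduct_mulVec_nonneg x
  rw [hform, zero_le_real] at this
  linarith

theorem posSemidef_I_smul_conjTranspose_nonsing_inv_sub [DecidableEq n] {A : Matrix n n ℂ}
    (hA : IsUnit A) (hAd : (I • (A - Aᴴ)).PosSemidef) :
    (I • ((A⁻¹)ᴴ - A⁻¹)).PosSemidef := by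
  have hdet := (isUnit_iff_isUnit_det A).mp hA
  have hcongr : A⁻¹ᴴ - A⁻¹ = A⁻¹ * (A - Aᴴ) * A⁻¹ᴴ := by
    rw [mul_sub, sub_mul, nonsing_inv_mul _ hdet, one_mul, mul_assoc, ← conjTranspose_mul,
      nonsing_inv_mul _ hdet, conjTranspose_one, mul_one]
  rw [hcongr, ← smul_mul_assoc, ← mul_smul_comm]
  simpa using hAd.conjTranspose_mul_mul_same A⁻¹ᴴ

end Matrix

theorem im_quadratic_form_resolvent_nonneg_general
    {n : Type*} [Fintype n] [DecidableEq n]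
    (M D : Matrix n n ℝ) (hM : M.PosSemidef) (hDsymm : D.IsSymm)
    (z : ℂ) (hz : 0 < z.im)
    (A : Matrix n n ℂ)
    (hA : A = z⁻¹ • M.map (fun x : ℝ => (x : ℂ)) - (D⁻¹).map (fun x : ℝ => (x : ℂ)))
    (hAinv : IsUnit A) :
    ∀ w : n → ℝ,
      0 ≤ (((fun i => (w i : ℂ)) ⬝ᵥ (A⁻¹ *ᵥ fun i => (w i : ℂ))) : ℂ).im := by
  intro w
  have hinv_im : (z⁻¹).im ≤ 0 := by
    rw [inv_im, neg_div, neg_nonpos]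
    exact div_nonneg hz.le (normSq_nonneg z)
  have hAd : (I • (A - Aᴴ)).PosSemidef := hA ▸
    posSemidef_I_smul_sub_conjTranspose_of_im_nonpos hM.map_ofReal
      hDsymm.inv.isHermitian_map_ofReal hinv_im
  have hw : star (fun i => (w i : ℂ)) = fun i => (w i : ℂ) := by
    ext i
    simp
  simpa only [hw] using im_star_dotProduct_mulVec_nonneg
    (posSemidef_I_smul_conjTranspose_nonsing_inv_sub hAinv hAd) (fun i => (w i : ℂ))

/-- If `M` is real symmetric positive semidefinite, `D` is real symmetric invertible,
`Im z > 0`, and `A = z⁻¹ M - D⁻¹` (viewed as a complex matrix) is invertible, then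
for every real vector `w`, `Im(wᵀ A⁻¹ w) ≥ 0`. -/
theorem im_quadratic_form_resolvent_nonneg
    {n : Type*} [Fintype n] [DecidableEq n]
    (M D : Matrix n n ℝ) (hM : M.PosSemidef) (hDsymm : D.IsSymm) (hD : IsUnit D)
    (z : ℂ) (hz : 0 < z.im)
    (A : Matrix n n ℂ)
    (hA : A = z⁻¹ • M.map (fun x : ℝ => (x : ℂ)) - (D⁻¹).map (fun x : ℝ => (x : ℂ)))
    (hAinv : IsUnit A) :
    ∀ w : n → ℝ,
      0 ≤ (((fun i => (w i : ℂ)) ⬝ᵥ (A⁻¹ *ᵥ fun i => (w i : ℂ))) : ℂ).im :=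
  im_quadratic_form_resolvent_nonneg_general M D hM hDsymm z hz A hA hAinv
end

section
/- Let q ≥ 1, let I ⊆ ℝ, and let B : ℝ → (q×q real symmetric matrices) be a family such that for all z, z′ ∈ I with z < z′ the matrix B(z′) − B(z) is positive definite. Then the set {z ∈ I : det(B(z)) = 0} is finite and contains at most q elements. -/
open Matrix

/-!
On the sum of the kernels of `B y` over points `y < z` of `I`, the quadratic form of `B z` is
positive definite: passing from `y` to `z` adds the positive definite form of `B z - B y`, and by
symmetry of `B y` a kernel vector of `B y` does not change the form of `B y`. So the kernel of
`B z` meets the kernels at earlier points trivially, the kernels at the zeros of `det B` form a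
direct sum inside `ℝ^q`, and each is nonzero, so there are at most `q` zeros.
-/

theorem Set.encard_le_of_forall_finset_card_le {α : Type*} {s : Set α} {k : ℕ}
    (h : ∀ t : Finset α, ↑t ⊆ s → t.card ≤ k) : s.encard ≤ k := by
  by_contra! hlt
  obtain ⟨t, hts, ht⟩ := Set.exists_subset_encard_eq (Order.add_one_le_of_lt hlt)
  have htfin : t.Finite := Set.finite_of_encard_eq_coe ht
  have hcard : htfin.toFinset.card = k + 1 := by
    exact_mod_cast htfin.encard_eq_coe_toFinset_card.symm.trans ht
  have := h htfin.toFinset (by simpa using hts)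
  omega

section

variable {ι n : Type*} [Fintype n]

theorem Matrix.IsSymm.dotProduct_mulVec_add_of_mulVec_eq_zero {A : Matrix n n ℝ} (hA : A.IsSymm)
    {u v : n → ℝ} (hv : A *ᵥ v = 0) : (u + v) ⬝ᵥ (A *ᵥ (u + v)) = u ⬝ᵥ (A *ᵥ u) := by
  have hvA : v ⬝ᵥ (A *ᵥ u) = 0 := by
    rw [dotProduct_mulVec, ← mulVec_transpose, hA.eq, hv, zero_dotProduct]
  rw [mulVec_add, hv, add_zero, add_dotProduct, hvA, add_zero]

def kerSup (B : ι → Matrix n n ℝ) (T : Finset ι) : Submodule ℝ (n → ℝ) :=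
  ⨆ y ∈ T, LinearMap.ker (B y).mulVecLin

theorem kerSup_insert [DecidableEq ι] (B : ι → Matrix n n ℝ) (a : ι) (T : Finset ι) :
    kerSup B (insert a T) = LinearMap.ker (B a).mulVecLin ⊔ kerSup B T :=
  Finset.iSup_insert a T _

variable [LinearOrder ι] {B : ι → Matrix n n ℝ} {I : Set ι}

theorem dotProduct_mulVec_pos_of_mem_kerSup (hsymm : ∀ y, (B y).IsSymm)
    (hmono : ∀ z ∈ I, ∀ z' ∈ I, z < z' → (B z' - B z).PosDef)
    {T : Finset ι} (hT : ↑T ⊆ I) {z : ι} (hz : z ∈ I)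
    (hlt : ∀ y ∈ T, y < z) {w : n → ℝ} (hw : w ∈ kerSup B T) (hw0 : w ≠ 0) :
    0 < w ⬝ᵥ (B z *ᵥ w) := by
  classical
  induction T using Finset.induction_on_max generalizing z w with
  | empty => exact absurd (by simpa [kerSup] using hw) hw0
  | insert a T haT ih =>
    rw [kerSup_insert, Submodule.mem_sup] at hw
    obtain ⟨v, hv, u, hu, rfl⟩ := hw
    have haI : a ∈ I := hT (Finset.mem_insert_self a T)
    have hTI : ↑T ⊆ I := fun y hy => hT (Finset.mem_insert_of_mem hy)
    have hgap : 0 < (v + u) ⬝ᵥ ((B z - B a) *ᵥ (v + u)) :=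
      (hmono a haI z hz (hlt a (Finset.mem_insert_self a T))).dotProduct_mulVec_pos hw0
    have hrest : 0 ≤ u ⬝ᵥ (B a *ᵥ u) := by
      rcases eq_or_ne u 0 with rfl | hu0
      · simp
      · exact (ih hTI haI haT hu hu0).le
    have hsplit : (v + u) ⬝ᵥ (B a *ᵥ (v + u)) = u ⬝ᵥ (B a *ᵥ u) := by
      rw [add_comm v u]
      exact (hsymm a).dotProduct_mulVec_add_of_mulVec_eq_zero hv
    rw [sub_mulVec, dotProduct_sub, hsplit] at hgap
    linarith

theorem disjoint_kerSup_ker (hsymm : ∀ y, (B y).IsSymm)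
    (hmono : ∀ z ∈ I, ∀ z' ∈ I, z < z' → (B z' - B z).PosDef)
    {T : Finset ι} (hT : ↑T ⊆ I) {z : ι} (hz : z ∈ I) (hlt : ∀ y ∈ T, y < z) :
    Disjoint (kerSup B T) (LinearMap.ker (B z).mulVecLin) := by
  rw [Submodule.disjoint_def]
  intro w hwT hwz
  by_contra hw0
  have hpos := dotProduct_mulVec_pos_of_mem_kerSup hsymm hmono hT hz hlt hwT hw0
  rw [LinearMap.mem_ker, mulVecLin_apply] at hwz
  simp [hwz] at hpos

theorem card_le_finrank_kerSup [DecidableEq n] (hsymm : ∀ y, (B y).IsSymm)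
    (hmono : ∀ z ∈ I, ∀ z' ∈ I, z < z' → (B z' - B z).PosDef)
    {T : Finset ι} (hT : ∀ y ∈ T, y ∈ I ∧ (B y).det = 0) :
    T.card ≤ Module.finrank ℝ (kerSup B T) := by
  classical
  induction T using Finset.induction_on_max with
  | empty => simp
  | insert a T haT ih =>
    obtain ⟨haI, hdet⟩ := hT a (Finset.mem_insert_self a T)
    have hTI : ∀ y ∈ T, y ∈ I ∧ (B y).det = 0 := fun y hy => hT y (Finset.mem_insert_of_mem hy)
    have hker : 0 < Module.finrank ℝ (LinearMap.ker (B a).mulVecLin) := by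
      obtain ⟨v, hv0, hv⟩ := exists_mulVec_eq_zero_iff.2 hdet
      exact Module.finrank_pos_iff_exists_ne_zero.2
        ⟨⟨v, hv⟩, fun h => hv0 (congrArg Subtype.val h)⟩
    have hdisj := disjoint_kerSup_ker hsymm hmono (fun y hy => (hTI y hy).1) haI haT
    have hsum :=
      Submodule.finrank_sup_add_finrank_inf_eq (LinearMap.ker (B a).mulVecLin) (kerSup B T)
    rw [hdisj.symm.eq_bot, finrank_bot, add_zero, ← kerSup_insert] at hsum
    rw [Finset.card_insert_of_notMem (fun h => lt_irrefl a (haT a h)), hsum]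
    have := ih hTI
    omega

end

theorem det_zero_solutions_finite_of_strict_mono_general
    (q : ℕ) (I : Set ℝ)
    (B : ℝ → Matrix (Fin q) (Fin q) ℝ)
    (hsymm : ∀ z, (B z).IsSymm)
    (hmono : ∀ z ∈ I, ∀ z' ∈ I, z < z' → (B z' - B z).PosDef) :
    {z ∈ I | (B z).det = 0}.Finite ∧ {z ∈ I | (B z).det = 0}.ncard ≤ q := by
  rw [← Set.encard_le_coe_iff_finite_ncard_le]
  refine Set.encard_le_of_forall_finset_card_le fun T hT => ?_
  calc T.card ≤ Module.finrank ℝ (kerSup B T) := card_le_finrank_kerSup hsymm hmono hT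
    _ ≤ Module.finrank ℝ (Fin q → ℝ) := Submodule.finrank_le _
    _ = q := Module.finrank_fin_fun ℝ

/-- If `B : ℝ → (q×q real symmetric matrices)` is strictly increasing on a set `I` in the
positive definite order, then `det(B(z)) = 0` has at most `q` solutions `z ∈ I`. -/
theorem det_zero_solutions_finite_of_strict_mono
    (q : ℕ) (hq : 1 ≤ q) (I : Set ℝ)
    (B : ℝ → Matrix (Fin q) (Fin q) ℝ)
    (hsymm : ∀ z, (B z).IsSymm)
    (hmono : ∀ z ∈ I, ∀ z' ∈ I, z < z' → (B z' - B z).PosDef) :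
    {z ∈ I | (B z).det = 0}.Finite ∧ {z ∈ I | (B z).det = 0}.ncard ≤ q :=
  det_zero_solutions_finite_of_strict_mono_general q I B hsymm hmono
end

section
/- Let C ≥ 1 and k ≥ 1 and let a, b, c, d, z be real numbers. Let F be the (C+k)×(C+k) real symmetric block matrix whose top-left C×C block is c·J_C + d·I_C (J_C the all-ones matrix), whose top-right C×k and bottom-left k×C blocks have all entries equal to b, and whose bottom-right k×k block is a·I_k. Then det(zI_{C+k} − F) = (z − d)^{C−1} (z − a)^{k−1} ( (z − d − Cc)(z − a) − C k b² ). -/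
/-!
Away from `z = a` and `z = d`, take the Schur complement of the invertible block `(z - a) I_k`:
it is `(z - d) I_C - (c + k b² / (z - a)) J_C`, and `α I + β J` is a rank-one perturbation of a
scalar matrix, with determinant `α ^ (C - 1) (α + C β)`. Both sides of the identity are
continuous in `z`, so it extends to the two excluded points.
-/

open Matrix

theorem smul_ones_mul_smul_ones {R ι κ : Type*} [CommSemiring R] [Fintype κ] (b c : R) :
    (b • of fun _ _ => 1 : Matrix ι κ R) * (c • of fun _ _ => 1 : Matrix κ ι R)
      = (Fintype.card κ * b * c) • of fun _ _ => 1 := by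
  ext i j
  simp [mul_apply]
  ring

section

variable {K ι : Type*} [Field K] [Fintype ι] [DecidableEq ι]

theorem det_smul_one_add_smul_ones [Nonempty ι] {α : K} (hα : α ≠ 0) (β : K) :
    (α • (1 : Matrix ι ι K) + β • of fun _ _ => 1).det
      = α ^ (Fintype.card ι - 1) * (α + Fintype.card ι * β) := by
  have hrankOne : α • (1 : Matrix ι ι K) + β • of (fun _ _ => 1)
      = α • (1 + replicateCol Unit (fun _ : ι => (1 : K))
          * replicateRow Unit (fun _ => β / α)) := by
    ext i j
    rcases eq_or_ne i j with rfl | hij <;> simp [one_apply, mul_apply, *] <;> field_simp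
  rw [hrankOne, det_smul, det_one_add_replicateCol_mul_replicateRow,
    ← pow_sub_one_mul Fintype.card_ne_zero]
  simp only [dotProduct, mul_one, Finset.sum_const, Finset.card_univ, nsmul_eq_mul]
  field_simp

theorem det_fromBlocks_smul_one₂₂ {κ : Type*} [Fintype κ] [DecidableEq κ]
    (A : Matrix ι ι K) (B : Matrix ι κ K) (C : Matrix κ ι K) {β : K} (hβ : β ≠ 0) :
    (fromBlocks A B C (β • 1)).det = β ^ Fintype.card κ * (A - β⁻¹ • (B * C)).det := by
  let _ : Invertible (β • 1 : Matrix κ κ K) :=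
    ⟨β⁻¹ • 1, by simp [hβ], by simp [hβ]⟩
  rw [det_fromBlocks₂₂, det_smul, det_one, mul_one,
    show ⅟(β • 1 : Matrix κ κ K) = β⁻¹ • 1 from rfl]
  simp

end

/-- Determinant of the block matrix with top-left block `cJ + dI`, off-diagonal blocks
all equal to `b`, and bottom-right block `aI`:
`det(zI - F) = (z-d)^{C-1} (z-a)^{k-1} ((z-d-Cc)(z-a) - Ckb²)`. -/
theorem det_two_block_ones_matrix
    (C k : ℕ) (hC : 1 ≤ C) (hk : 1 ≤ k) (a b c d z : ℝ)
    (F : Matrix (Fin C ⊕ Fin k) (Fin C ⊕ Fin k) ℝ)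
    (hF : F = Matrix.fromBlocks
      (c • Matrix.of (fun _ _ => (1 : ℝ)) + d • (1 : Matrix (Fin C) (Fin C) ℝ))
      (b • Matrix.of (fun _ _ => (1 : ℝ)))
      (b • Matrix.of (fun _ _ => (1 : ℝ)))
      (a • (1 : Matrix (Fin k) (Fin k) ℝ))) :
    (z • (1 : Matrix (Fin C ⊕ Fin k) (Fin C ⊕ Fin k) ℝ) - F).det
      = (z - d) ^ (C - 1) * (z - a) ^ (k - 1)
        * ((z - d - (C : ℝ) * c) * (z - a) - (C : ℝ) * (k : ℝ) * b ^ 2) := by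
  have : NeZero C := ⟨by omega⟩
  have hblocks : ∀ w : ℝ, w • 1 - F = fromBlocks ((w - d) • 1 + (-c) • of fun _ _ => 1)
      ((-b) • of fun _ _ => 1) ((-b) • of fun _ _ => 1) ((w - a) • 1) := fun w => by
    rw [hF, ← fromBlocks_one, fromBlocks_smul, sub_eq_add_neg, fromBlocks_neg, fromBlocks_add]
    congr 1 <;> module
  revert z
  refine funext_iff.1 (Continuous.ext_on ((Set.toFinite {a, d}).countable.dense_compl ℝ)
    (by fun_prop) (by fun_prop) fun w hw => ?_)
  obtain ⟨hwa, hwd⟩ : w - a ≠ 0 ∧ w - d ≠ 0 := by simp_all [sub_eq_zero]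
  rw [hblocks, det_fromBlocks_smul_one₂₂ _ _ _ hwa, smul_ones_mul_smul_ones, smul_smul,
    add_sub_assoc, ← sub_smul, det_smul_one_add_smul_ones hwd, Fintype.card_fin, Fintype.card_fin,
    ← pow_sub_one_mul (by omega : k ≠ 0)]
  field_simp
  ring
end

section
/- Let q ≥ 1, let h : ℝ^q → ℝ be uniformly continuous, let γ be the standard Gaussian measure on ℝ^q (the q-fold product of the standard Gaussian on ℝ), and let (g_ℓ)_{ℓ≥1} be i.i.d. random vectors with law γ. Let T, T₁, T₂, … be linear maps ℝ^q → ℝ^q and v, v₁, v₂, … ∈ ℝ^q with √(log n)·(‖Tₙ − T‖ + ‖vₙ − v‖) → 0 as n → ∞. Let ρ be the pushforward of γ under x ↦ h(Tx + v). Then almost surely, max_{ℓ ≤ n} dist( h(Tₙ g_ℓ + vₙ), supp(ρ) ) → 0 as n → ∞. -/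
open MeasureTheory ProbabilityTheory Filter Metric

/-!
By the sub-Gaussian Chernoff bound and a union bound over coordinates, a standard Gaussian
vector satisfies `P(‖g‖ > 2√(log ℓ)) ≤ 2q/ℓ²`, so by Borel–Cantelli almost surely
`max_{ℓ ≤ n} ‖g_ℓ‖ ≤ C + 2√(log n)` for all `n`. Hence `Tₙ g_ℓ + vₙ` is uniformly (in `ℓ ≤ n`)
within `(C + 1 + 2√(log n)) (‖Tₙ - T‖ + ‖vₙ - v‖) → 0` of `T g_ℓ + v`, and uniform continuity
of `h` moves `h(Tₙ g_ℓ + vₙ)` uniformly close to `h(T g_ℓ + v)`, which lies in the support of `ρ`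
because the Gaussian measure charges every open set.
-/

open Real Finset
open scoped NNReal Topology

lemma hasSubgaussianMGF_id_gaussianReal (v : ℝ≥0) :
    HasSubgaussianMGF id v (gaussianReal 0 v) where
  integrable_exp_mul := integrable_exp_mul_gaussianReal
  mgf_le t := by simp [mgf_id_gaussianReal]

lemma ProbabilityTheory.HasSubgaussianMGF.measure_abs_ge_le {Ω : Type*} {m : MeasurableSpace Ω}
    {μ : Measure Ω} {X : Ω → ℝ} {c : ℝ≥0} (hX : HasSubgaussianMGF X c μ) {ε : ℝ} (hε : 0 ≤ ε) :
    μ.real {ω | ε ≤ |X ω|} ≤ 2 * exp (-ε ^ 2 / (2 * c)) := by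
  have hsplit : {ω | ε ≤ |X ω|} = {ω | ε ≤ X ω} ∪ {ω | ε ≤ (-X) ω} := by
    ext ω
    simp [le_abs]
  calc μ.real {ω | ε ≤ |X ω|} ≤ μ.real {ω | ε ≤ X ω} + μ.real {ω | ε ≤ (-X) ω} :=
        hsplit ▸ measureReal_union_le _ _
    _ ≤ exp (-ε ^ 2 / (2 * c)) + exp (-ε ^ 2 / (2 * c)) :=
        add_le_add (hX.measure_ge_le hε) (hX.neg.measure_ge_le hε)
    _ = 2 * exp (-ε ^ 2 / (2 * c)) := by ring

lemma ae_eventually_notMem_of_summable_measureReal {α : Type*} {m : MeasurableSpace α}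
    {μ : Measure α} [IsFiniteMeasure μ] {s : ℕ → Set α} {u : ℕ → ℝ} (hu : Summable u)
    (hs : ∀ n, μ.real (s n) ≤ u n) : ∀ᵐ x ∂μ, ∀ᶠ n in atTop, x ∉ s n := by
  refine ae_eventually_notMem (ne_top_of_le_ne_top (ENNReal.ofReal_ne_top (r := ∑' n, u n)) ?_)
  rw [ENNReal.ofReal_tsum_of_nonneg (fun n => measureReal_nonneg.trans (hs n)) hu]
  refine ENNReal.tsum_le_tsum fun n => ?_
  rw [← ofReal_measureReal]
  exact ENNReal.ofReal_le_ofReal (hs n)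

lemma summable_exp_neg_two_mul_log_natCast : Summable fun n : ℕ => exp (-(2 * log n)) := by
  refine (summable_nat_rpow.2 (by norm_num : (-2 : ℝ) < -1)).congr_cofinite ?_
  filter_upwards [eventually_cofinite_ne 0] with n hn
  rw [rpow_def_of_pos (by positivity)]
  ring_nf

section StandardGaussianVector

variable {ι : Type*} [Fintype ι]

lemma hasSubgaussianMGF_eval_pi_gaussianReal (i : ι) :
    HasSubgaussianMGF (fun x : ι → ℝ => x i) 1 (Measure.pi fun _ => gaussianReal 0 1) := by
  rw [← HasSubgaussianMGF.id_map_iff (measurable_pi_apply i).aemeasurable,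
    (measurePreserving_eval _ i).map_eq]
  exact hasSubgaussianMGF_id_gaussianReal 1

lemma measureReal_norm_gt_pi_gaussianReal_le {t : ℝ} (ht : 0 ≤ t) :
    (Measure.pi fun _ : ι => gaussianReal 0 1).real {x | t < ‖x‖}
      ≤ 2 * Fintype.card ι * exp (-t ^ 2 / 2) := by
  have hcover : {x : ι → ℝ | t < ‖x‖} ⊆ ⋃ i, {x | t ≤ |x i|} := by
    intro x hx
    by_contra hnot
    simp only [Set.mem_iUnion, Set.mem_ofPred_eq, not_exists, not_le] at hnot
    exact hx.not_ge ((pi_norm_le_iff_of_nonneg ht).2 fun i => (hnot i).le)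
  calc (Measure.pi fun _ : ι => gaussianReal 0 1).real {x | t < ‖x‖}
      ≤ (Measure.pi fun _ : ι => gaussianReal 0 1).real (⋃ i, {x | t ≤ |x i|}) :=
        measureReal_mono hcover
    _ ≤ ∑ i, (Measure.pi fun _ : ι => gaussianReal 0 1).real {x | t ≤ |x i|} :=
        measureReal_iUnion_fintype_le _
    _ ≤ ∑ _i : ι, 2 * exp (-t ^ 2 / 2) := sum_le_sum fun i _ => by
        simpa using (hasSubgaussianMGF_eval_pi_gaussianReal i).measure_abs_ge_le ht
    _ = 2 * Fintype.card ι * exp (-t ^ 2 / 2) := by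
        rw [sum_const, card_univ, nsmul_eq_mul]
        ring

lemma ae_eventually_norm_le_two_mul_sqrt_log {Ω : Type*} [MeasurableSpace Ω] {P : Measure Ω}
    [IsProbabilityMeasure P] {g : ℕ → Ω → ι → ℝ} (hg : ∀ ℓ, AEMeasurable (g ℓ) P)
    (hlaw : ∀ ℓ, P.map (g ℓ) = Measure.pi fun _ => gaussianReal 0 1) :
    ∀ᵐ ω ∂P, ∀ᶠ ℓ in atTop, ‖g ℓ ω‖ ≤ 2 * √(log ℓ) := by
  have htail (ℓ : ℕ) : P.real {ω | 2 * √(log ℓ) < ‖g ℓ ω‖}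
      ≤ 2 * Fintype.card ι * exp (-(2 * log ℓ)) := by
    have hmeas : MeasurableSet {x : ι → ℝ | 2 * √(log ℓ) < ‖x‖} :=
      measurableSet_lt measurable_const continuous_norm.measurable
    have hexp : -(2 * √(log ℓ)) ^ 2 / 2 = -(2 * log ℓ) := by
      rw [mul_pow, sq_sqrt (log_natCast_nonneg ℓ)]
      ring
    change P.real (g ℓ ⁻¹' {x | 2 * √(log ℓ) < ‖x‖}) ≤ _
    rw [← hexp, ← map_measureReal_apply_of_aemeasurable (hg ℓ) hmeas, hlaw]
    exact measureReal_norm_gt_pi_gaussianReal_le (by positivity)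
  filter_upwards [ae_eventually_notMem_of_summable_measureReal
    (summable_exp_neg_two_mul_log_natCast.mul_left _) htail] with ω hω
  exact hω.mono fun ℓ hℓ => not_lt.1 hℓ

end StandardGaussianVector

lemma exists_forall_le_add_of_eventually_le {f b : ℕ → ℝ} (h : ∀ᶠ n in atTop, f n ≤ b n) :
    ∃ C, ∀ n, f n ≤ C + b n := by
  obtain ⟨C, hC⟩ := (isBoundedUnder_of_eventually_le (u := fun n => f n - b n) (a := 0)
    (h.mono fun n hn => sub_nonpos.2 hn)).bddAbove_range
  exact ⟨C, fun n => by linarith [hC ⟨n, rfl⟩]⟩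

lemma monotone_sqrt_log_natCast : Monotone fun n : ℕ => √(log n) := by
  intro m n hmn
  refine sqrt_le_sqrt ?_
  rcases Nat.eq_zero_or_pos m with rfl | hm
  · simpa using log_natCast_nonneg n
  · exact log_le_log (by exact_mod_cast hm) (by exact_mod_cast hmn)

lemma tendsto_sqrt_log_natCast_atTop : Tendsto (fun n : ℕ => √(log n)) atTop atTop :=
  tendsto_sqrt_atTop.comp (tendsto_log_atTop.comp tendsto_natCast_atTop_atTop)

lemma tendsto_nhds_zero_of_mul_of_tendsto_atTop {α : Type*} {l : Filter α} {a d : α → ℝ}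
    (ha : Tendsto a l atTop) (had : Tendsto (fun x => a x * d x) l (𝓝 0)) :
    Tendsto d l (𝓝 0) :=
  (had.div_atTop ha).congr' ((ha.eventually_gt_atTop 0).mono fun _ hx =>
    mul_div_cancel_left₀ _ hx.ne')

lemma mem_measSupport_map {X Y : Type*} [TopologicalSpace X] [MeasurableSpace X]
    [TopologicalSpace Y] [MeasurableSpace Y] {μ : Measure X} [μ.IsOpenPosMeasure] {f : X → Y}
    (hf : Continuous f) (hfm : AEMeasurable f μ) (x : X) : f x ∈ measSupport (μ.map f) :=
  fun U hU hxU hzero => (hU.preimage hf).measure_ne_zero μ ⟨x, hxU⟩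
    (le_zero_iff.1 (hzero ▸ Measure.le_map_apply hfm U))

lemma isOpenPosMeasure_gaussianReal (μ : ℝ) {v : ℝ≥0} (hv : v ≠ 0) :
    (gaussianReal μ v).IsOpenPosMeasure :=
  (gaussianReal_absolutelyContinuous' μ hv).isOpenPosMeasure

lemma dist_apply_add_apply_add_le {𝕜 E F : Type*} [NontriviallyNormedField 𝕜]
    [SeminormedAddCommGroup E] [NormedSpace 𝕜 E] [SeminormedAddCommGroup F] [NormedSpace 𝕜 F]
    (A B : E →L[𝕜] F) (a b : F) (x : E) :
    dist (A x + a) (B x + b) ≤ ‖A - B‖ * ‖x‖ + ‖a - b‖ := by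
  rw [dist_eq_norm, add_sub_add_comm, ← sub_apply]
  exact (norm_add_le _ _).trans (add_le_add_left ((A - B).le_opNorm x) _)

lemma eventually_forall_infDist_lt {E F α : Type*} [SeminormedAddCommGroup E] [NormedSpace ℝ E]
    [SeminormedAddCommGroup F] [NormedSpace ℝ F] [PseudoMetricSpace α] {h : F → α}
    (hh : UniformContinuous h) {S : Set α} {L : E →L[ℝ] F} {w : F} (hS : ∀ x, h (L x + w) ∈ S)
    {T : ℕ → E →L[ℝ] F} {v : ℕ → F} {x : ℕ → E} {R : ℕ → ℝ} (hx : ∀ n, ∀ ℓ ≤ n, ‖x ℓ‖ ≤ R n)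
    (hR : Tendsto (fun n => (R n + 1) * (‖T n - L‖ + ‖v n - w‖)) atTop (𝓝 0))
    {ε : ℝ} (hε : 0 < ε) :
    ∀ᶠ n in atTop, ∀ ℓ ≤ n, infDist (h (T n (x ℓ) + v n)) S < ε := by
  obtain ⟨δ, hδ, hδε⟩ := Metric.uniformContinuous_iff.1 hh ε hε
  filter_upwards [hR.eventually (gt_mem_nhds hδ)] with n hn ℓ hℓ
  have hclose : dist (T n (x ℓ) + v n) (L (x ℓ) + w) < δ := calc
    _ ≤ ‖T n - L‖ * ‖x ℓ‖ + ‖v n - w‖ := dist_apply_add_apply_add_le _ _ _ _ _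
    _ ≤ (R n + 1) * (‖T n - L‖ + ‖v n - w‖) := by
        nlinarith [hx n ℓ hℓ, norm_nonneg (T n - L), norm_nonneg (v n - w), norm_nonneg (x ℓ)]
    _ < δ := hn
  exact (infDist_le_dist_of_mem (hS (x ℓ))).trans_lt (hδε hclose)

lemma tendsto_sup'_range_of_eventually_forall_lt {F : ℕ → ℕ → ℝ} (hF0 : ∀ n ℓ, 0 ≤ F n ℓ)
    (hF : ∀ ε > 0, ∀ᶠ n in atTop, ∀ ℓ ≤ n, F n ℓ < ε) :
    Tendsto (fun n => (range (n + 1)).sup' nonempty_range_add_one (F n)) atTop (𝓝 0) := by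
  refine tendsto_order.2 ⟨fun a ha => Eventually.of_forall fun n => ?_, fun ε hε => ?_⟩
  · exact ha.trans_le ((hF0 n 0).trans (le_sup' (F n) (by simp)))
  · exact (hF ε hε).mono fun n hn =>
      (sup'_lt_iff _).2 fun ℓ hℓ => hn ℓ (Nat.lt_succ_iff.1 (mem_range.1 hℓ))

theorem strong_convergence_of_uniformContinuous_general
    (q : ℕ) (h : (Fin q → ℝ) → ℝ) (hh : UniformContinuous h)
    {Ω : Type*} [MeasurableSpace Ω] (P : Measure Ω) [IsProbabilityMeasure P]
    (g : ℕ → Ω → (Fin q → ℝ))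
    (hgmeas : ∀ ℓ, Measurable (g ℓ))
    (hlaw : ∀ ℓ, Measure.map (g ℓ) P
      = Measure.pi (fun _ : Fin q => gaussianReal 0 1))
    (T : ℕ → (Fin q → ℝ) →L[ℝ] (Fin q → ℝ)) (Tlim : (Fin q → ℝ) →L[ℝ] (Fin q → ℝ))
    (v : ℕ → (Fin q → ℝ)) (vlim : Fin q → ℝ)
    (hconv : Tendsto
      (fun n : ℕ => Real.sqrt (Real.log n) * (‖T n - Tlim‖ + ‖v n - vlim‖))
      atTop (nhds 0))
    (ρ : Measure ℝ)
    (hρ : ρ = Measure.map (fun x => h (Tlim x + vlim))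
      (Measure.pi (fun _ : Fin q => gaussianReal 0 1))) :
    ∀ᵐ ω ∂P, Tendsto
      (fun n : ℕ => Finset.sup' (Finset.range (n + 1)) Finset.nonempty_range_add_one
        (fun ℓ => infDist (h (T n (g ℓ ω) + v n)) (measSupport ρ)))
      atTop (nhds 0) := by
  have := isOpenPosMeasure_gaussianReal 0 one_ne_zero
  have hcont : Continuous fun x => h (Tlim x + vlim) :=
    hh.continuous.comp (Tlim.continuous.add continuous_const)
  have hsupp : ∀ x, h (Tlim x + vlim) ∈ measSupport ρ :=
    hρ ▸ mem_measSupport_map hcont hcont.measurable.aemeasurable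
  have hd : Tendsto (fun n : ℕ => ‖T n - Tlim‖ + ‖v n - vlim‖) atTop (𝓝 0) :=
    tendsto_nhds_zero_of_mul_of_tendsto_atTop tendsto_sqrt_log_natCast_atTop hconv
  filter_upwards [ae_eventually_norm_le_two_mul_sqrt_log (fun ℓ => (hgmeas ℓ).aemeasurable) hlaw]
    with ω hω
  obtain ⟨C, hC⟩ := exists_forall_le_add_of_eventually_le hω
  have hbound (n ℓ : ℕ) (hℓ : ℓ ≤ n) : ‖g ℓ ω‖ ≤ C + 2 * √(log n) :=
    (hC ℓ).trans (by gcongr C + 2 * ?_; exact monotone_sqrt_log_natCast hℓ)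
  have hR : Tendsto (fun n : ℕ => (C + 2 * √(log n) + 1) * (‖T n - Tlim‖ + ‖v n - vlim‖))
      atTop (𝓝 0) := by
    simpa [add_mul, mul_assoc, add_right_comm] using (hd.const_mul (C + 1)).add (hconv.const_mul 2)
  exact tendsto_sup'_range_of_eventually_forall_lt (fun _ _ => infDist_nonneg)
    fun ε hε => eventually_forall_infDist_lt hh hsupp hbound hR hε

/-- Strong convergence lemma: if `h` is uniformly continuous, `(g_ℓ)` are i.i.d. standard
Gaussian vectors in `ℝ^q`, and `√(log n)(‖Tₙ - T‖ + ‖vₙ - v‖) → 0`, then almost surely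
`max_{ℓ ≤ n} dist(h(Tₙ g_ℓ + vₙ), supp ρ) → 0`, where `ρ` is the law of `h(T g + v)`. -/
theorem strong_convergence_of_uniformContinuous
    (q : ℕ) (h : (Fin q → ℝ) → ℝ) (hh : UniformContinuous h)
    {Ω : Type*} [MeasurableSpace Ω] (P : Measure Ω) [IsProbabilityMeasure P]
    (g : ℕ → Ω → (Fin q → ℝ))
    (hgmeas : ∀ ℓ, Measurable (g ℓ))
    (hindep : iIndepFun g P)
    (hlaw : ∀ ℓ, Measure.map (g ℓ) P
      = Measure.pi (fun _ : Fin q => gaussianReal 0 1))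
    (T : ℕ → (Fin q → ℝ) →L[ℝ] (Fin q → ℝ)) (Tlim : (Fin q → ℝ) →L[ℝ] (Fin q → ℝ))
    (v : ℕ → (Fin q → ℝ)) (vlim : Fin q → ℝ)
    (hconv : Tendsto
      (fun n : ℕ => Real.sqrt (Real.log n) * (‖T n - Tlim‖ + ‖v n - vlim‖))
      atTop (nhds 0))
    (ρ : Measure ℝ)
    (hρ : ρ = Measure.map (fun x => h (Tlim x + vlim))
      (Measure.pi (fun _ : Fin q => gaussianReal 0 1))) :
    ∀ᵐ ω ∂P, Tendsto
      (fun n : ℕ => Finset.sup' (Finset.range (n + 1)) Finset.nonempty_range_add_one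
        (fun ℓ => infDist (h (T n (g ℓ ω) + v n)) (measSupport ρ)))
      atTop (nhds 0) :=
  strong_convergence_of_uniformContinuous_general q h hh P g hgmeas hlaw T Tlim v vlim hconv ρ hρ
end
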